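/- First-order approximation of the Hamiltonian flow difference: let (x_t, p_t) and (x̄_t, p̄_t) both solve the Hamiltonian ODE ẋ = p, ṗ = -∇V(x), with -βI ≼ ∇²V ≼ βI and h ≲ β^{-1/2}. Let H_t = ∫₀¹ ∇²V((1-s)x_t + s·x̄_t) ds, δx_t = x_t - x̄_t, δp_t = p_t - p̄_t. Then δx_h = δx₀ + h·δp₀ + R_x and δp_h = δp₀ - (∫₀ʰ H_s ds)·δx₀ + R_p, where ‖R_x‖ ≲ β·h²·‖δx₀‖ + β·h³·‖δp₀‖ and ‖R_p‖ ≲ β·h²·‖δp₀‖ + β²·h³·‖δx₀‖. -/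

import Mathlib

/-!
Both differences `u = x - x̄`, `v = p - p̄` solve the linear system `u' = v`, `v' = -H_t u`, since
`∇V(x) - ∇V(x̄) = H_t (x - x̄)` by the fundamental theorem of calculus along the segment, and
`‖H_t‖ ≤ β`. Comparing the maxima of `‖u‖` and `‖v‖` on `[0, h]` gives
`max ‖u‖ ≤ ‖u₀‖ + h max ‖v‖` and `max ‖v‖ ≤ ‖v₀‖ + β h max ‖u‖`, which close up to
`max ‖u‖ ≲ ‖u₀‖ + h ‖v₀‖` and `max ‖v‖ ≲ ‖v₀‖ + β h ‖u₀‖` once `β h² ≤ 1/2`. The remainders are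
`R_x = ∫₀ʰ (v_s - v₀) ds` and `R_p = ∫₀ʰ H_s (u₀ - u_s) ds`, whose integrands are bounded by
`β h max ‖u‖` and `β h max ‖v‖`.
-/

open Real intervalIntegral Set MeasureTheory

lemma ContDiff.gradient {E : Type*} [NormedAddCommGroup E] [InnerProductSpace ℝ E] [CompleteSpace E]
    {f : E → ℝ} {n : WithTop ℕ∞} (hf : ContDiff ℝ (n + 1) f) : ContDiff ℝ n (gradient f) :=
  (InnerProductSpace.toDual ℝ E).symm.contDiff.comp (hf.fderiv_right le_rfl)

section MeanFDeriv

variable {E F : Type*} [NormedAddCommGroup E] [NormedSpace ℝ E]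
  [NormedAddCommGroup F] [NormedSpace ℝ F]

/-- `meanFDeriv (∇V) x_t x̄_t` is the averaged Hessian `H_t`. -/
noncomputable def meanFDeriv (f : E → F) (a b : E) : E →L[ℝ] F :=
  ∫ u in (0 : ℝ)..1, fderiv ℝ f ((1 - u) • a + u • b)

lemma norm_meanFDeriv_le {f : E → F} {β : ℝ} (hf : ∀ z, ‖fderiv ℝ f z‖ ≤ β) (a b : E) :
    ‖meanFDeriv f a b‖ ≤ β := by
  simpa [meanFDeriv] using
    norm_integral_le_of_norm_le_const (a := 0) (b := 1) fun u _ => hf ((1 - u) • a + u • b)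

lemma continuous_meanFDeriv {f : E → F} (hf : ContDiff ℝ 1 f) :
    Continuous fun q : E × E => meanFDeriv f q.1 q.2 :=
  continuous_parametric_intervalIntegral_of_continuous'
    (f := fun (q : E × E) (u : ℝ) => fderiv ℝ f ((1 - u) • q.1 + u • q.2))
    ((hf.continuous_fderiv one_ne_zero).comp (by fun_prop)) 0 1

lemma sub_eq_meanFDeriv_apply [CompleteSpace F] {f : E → F} (hf : ContDiff ℝ 1 f) (a b : E) :
    f a - f b = meanFDeriv f a b (a - b) := by
  have hderiv : ∀ u ∈ uIcc (0 : ℝ) 1, HasDerivAt (fun u : ℝ => f ((1 - u) • a + u • b))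
      (fderiv ℝ f ((1 - u) • a + u • b) (b - a)) u := by
    intro u _
    have hseg : HasDerivAt (fun u : ℝ => (1 - u) • a + u • b) (b - a) u := by
      convert ((hasDerivAt_id u).smul_const (b - a)).const_add a using 1
      · funext u; simp only [id, sub_smul, one_smul, smul_sub]; abel
      · simp
    exact ((hf.differentiable one_ne_zero _).hasFDerivAt).comp_hasDerivAt u hseg
  have hcont : Continuous fun u : ℝ => fderiv ℝ f ((1 - u) • a + u • b) :=
    (hf.continuous_fderiv one_ne_zero).comp (by fun_prop)
  have hftc := integral_eq_sub_of_hasDerivAt hderiv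
    ((hcont.clm_apply continuous_const).intervalIntegrable 0 1)
  rw [meanFDeriv, ContinuousLinearMap.intervalIntegral_apply (hcont.intervalIntegrable 0 1)]
  simp_rw [← neg_sub b a, map_neg, intervalIntegral.integral_neg, hftc]
  simp

lemma ContinuousOn.meanFDeriv {X : Type*} [TopologicalSpace X] {f : E → F} (hf : ContDiff ℝ 1 f)
    {a b : X → E} {s : Set X} (ha : ContinuousOn a s) (hb : ContinuousOn b s) :
    ContinuousOn (fun t => meanFDeriv f (a t) (b t)) s :=
  (continuous_meanFDeriv hf).comp_continuousOn (ha.prodMk hb)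

end MeanFDeriv

section SecondOrder

variable {E : Type*} [NormedAddCommGroup E] [NormedSpace ℝ E] {u v w : ℝ → E} {β h : ℝ}

lemma norm_sub_le_mul_of_hasDerivAt_Icc {f f' : ℝ → E} {C : ℝ}
    (hf : ∀ t ∈ Icc 0 h, HasDerivAt f (f' t) t) (hC : ∀ t ∈ Icc 0 h, ‖f' t‖ ≤ C)
    {t : ℝ} (ht : t ∈ Icc 0 h) : ‖f t - f 0‖ ≤ C * h :=
  calc ‖f t - f 0‖ ≤ C * (t - 0) := norm_image_sub_le_of_norm_deriv_le_segment'
        (fun s hs => (hf s hs).hasDerivWithinAt) (fun s hs => hC s (Ico_subset_Icc_self hs)) t ht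
    _ ≤ C * h := mul_le_mul_of_nonneg_left (by linarith [ht.2]) ((norm_nonneg _).trans (hC t ht))

lemma norm_le_of_second_order_bound (hβ : 0 ≤ β) (hβh : β * h ^ 2 ≤ 1 / 2)
    (hu : ∀ t ∈ Icc 0 h, HasDerivAt u (v t) t) (hv : ∀ t ∈ Icc 0 h, HasDerivAt v (w t) t)
    (hw : ∀ t ∈ Icc 0 h, ‖w t‖ ≤ β * ‖u t‖) {t : ℝ} (ht : t ∈ Icc 0 h) :
    ‖u t‖ ≤ 2 * (‖u 0‖ + h * ‖v 0‖) ∧ ‖v t‖ ≤ 2 * (‖v 0‖ + β * h * ‖u 0‖) := by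
  have hne : (Icc 0 h).Nonempty := ⟨t, ht⟩
  have h0 : 0 ≤ h := ht.1.trans ht.2
  obtain ⟨tu, htu, hmax_u⟩ := isCompact_Icc.exists_isMaxOn hne
    (HasDerivAt.continuousOn hu).norm
  obtain ⟨tv, htv, hmax_v⟩ := isCompact_Icc.exists_isMaxOn hne
    (HasDerivAt.continuousOn hv).norm
  set Mu := ‖u tu‖
  set Mv := ‖v tv‖
  have hMu : Mu ≤ ‖u 0‖ + Mv * h := by
    linarith [norm_le_norm_add_norm_sub' (u tu) (u 0),
      norm_sub_le_mul_of_hasDerivAt_Icc hu (fun s hs => hmax_v hs) htu]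
  have hMv : Mv ≤ ‖v 0‖ + β * Mu * h := by
    linarith [norm_le_norm_add_norm_sub' (v tv) (v 0), norm_sub_le_mul_of_hasDerivAt_Icc hv
      (fun s hs => (hw s hs).trans (mul_le_mul_of_nonneg_left (hmax_u hs) hβ)) htv]
  have hMu' : Mu ≤ 2 * (‖u 0‖ + h * ‖v 0‖) := by
    nlinarith [mul_le_mul_of_nonneg_right hMv h0, norm_nonneg (u tu)]
  have hMv' : Mv ≤ 2 * (‖v 0‖ + β * h * ‖u 0‖) := by
    nlinarith [mul_le_mul_of_nonneg_left hMu' (mul_nonneg hβ h0), norm_nonneg (v 0)]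
  exact ⟨(hmax_u ht).trans hMu', (hmax_v ht).trans hMv'⟩

lemma norm_sub_sub_smul_le_of_second_order_bound (hβ : 0 ≤ β) (h0 : 0 ≤ h)
    (hβh : β * h ^ 2 ≤ 1 / 2)
    (hu : ∀ t ∈ Icc 0 h, HasDerivAt u (v t) t) (hv : ∀ t ∈ Icc 0 h, HasDerivAt v (w t) t)
    (hw : ∀ t ∈ Icc 0 h, ‖w t‖ ≤ β * ‖u t‖) :
    ‖u h - u 0 - h • v 0‖ ≤ 2 * (β * h ^ 2 * ‖u 0‖ + β * h ^ 3 * ‖v 0‖) := by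
  have hv_dev : ∀ t ∈ Icc 0 h, ‖v t - v 0‖ ≤ β * (2 * (‖u 0‖ + h * ‖v 0‖)) * h :=
    fun t ht => norm_sub_le_mul_of_hasDerivAt_Icc hv (fun s hs => (hw s hs).trans
      (mul_le_mul_of_nonneg_left (norm_le_of_second_order_bound hβ hβh hu hv hw hs).1 hβ)) ht
  have hdrift : ∀ t ∈ Icc 0 h, HasDerivAt (fun t => u t - t • v 0) (v t - v 0) t := fun t ht => by
    simpa using (hu t ht).fun_sub ((hasDerivAt_id' t).smul_const (v 0))
  calc ‖u h - u 0 - h • v 0‖ = ‖(u h - h • v 0) - (u 0 - (0 : ℝ) • v 0)‖ := by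
        rw [zero_smul, sub_zero, sub_right_comm]
    _ ≤ β * (2 * (‖u 0‖ + h * ‖v 0‖)) * h * h :=
        norm_sub_le_mul_of_hasDerivAt_Icc hdrift hv_dev ⟨h0, le_rfl⟩
    _ = 2 * (β * h ^ 2 * ‖u 0‖ + β * h ^ 3 * ‖v 0‖) := by ring

lemma norm_sub_add_integral_apply_le_of_linear_second_order [CompleteSpace E] {A : ℝ → E →L[ℝ] E}
    (hβ : 0 ≤ β) (h0 : 0 ≤ h) (hβh : β * h ^ 2 ≤ 1 / 2)
    (hA : ContinuousOn A (Icc 0 h)) (hAβ : ∀ t ∈ Icc 0 h, ‖A t‖ ≤ β)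
    (hu : ∀ t ∈ Icc 0 h, HasDerivAt u (v t) t) (hv : ∀ t ∈ Icc 0 h, HasDerivAt v (-A t (u t)) t) :
    ‖v h - v 0 + (∫ s in (0 : ℝ)..h, A s) (u 0)‖
      ≤ 2 * (β * h ^ 2 * ‖v 0‖ + β ^ 2 * h ^ 3 * ‖u 0‖) := by
  have hw : ∀ t ∈ Icc 0 h, ‖-A t (u t)‖ ≤ β * ‖u t‖ := fun t ht => by
    rw [norm_neg]; exact (A t).le_of_opNorm_le (hAβ t ht) _
  have hu_dev : ∀ t ∈ Icc 0 h, ‖u t - u 0‖ ≤ 2 * (‖v 0‖ + β * h * ‖u 0‖) * h :=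
    fun t ht => norm_sub_le_mul_of_hasDerivAt_Icc hu
      (fun s hs => (norm_le_of_second_order_bound hβ hβh hu hv hw hs).2) ht
  rw [← uIcc_of_le h0] at hu hv hA hAβ hu_dev
  have hv_int : v h - v 0 = ∫ s in (0 : ℝ)..h, -A s (u s) :=
    (integral_eq_sub_of_hasDerivAt hv
      ((hA.clm_apply (HasDerivAt.continuousOn hu)).neg.intervalIntegrable)).symm
  have hA_int : (∫ s in (0 : ℝ)..h, A s) (u 0) = ∫ s in (0 : ℝ)..h, A s (u 0) :=
    ContinuousLinearMap.intervalIntegral_apply hA.intervalIntegrable _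
  have hremainder : v h - v 0 + (∫ s in (0 : ℝ)..h, A s) (u 0)
      = ∫ s in (0 : ℝ)..h, A s (u 0 - u s) := by
    rw [hv_int, hA_int, ← integral_add (f := fun s => -A s (u s)) (g := fun s => A s (u 0))
      ((hA.clm_apply (HasDerivAt.continuousOn hu)).neg.intervalIntegrable)
      ((hA.clm_apply continuousOn_const).intervalIntegrable)]
    refine integral_congr fun s _ => ?_
    simp only [map_sub]; abel
  rw [hremainder]
  calc ‖∫ s in (0 : ℝ)..h, A s (u 0 - u s)‖
      ≤ β * (2 * (‖v 0‖ + β * h * ‖u 0‖) * h) * |h - 0| := by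
        refine norm_integral_le_of_norm_le_const fun s hs => ?_
        have hs := uIoc_subset_uIcc hs
        exact (A s).le_of_opNorm_le_of_le (hAβ s hs) ((norm_sub_rev _ _).trans_le (hu_dev s hs))
    _ = 2 * (β * h ^ 2 * ‖v 0‖ + β ^ 2 * h ^ 3 * ‖u 0‖) := by
        rw [sub_zero, abs_of_nonneg h0]; ring

end SecondOrder

/-- First-order approximation of the difference of two Hamiltonian flows: let
`(x_t, p_t)` and `(x̄_t, p̄_t)` both solve `ẋ = p`, `ṗ = -∇V(x)` with
`‖∇²V‖_op ≤ β`, and let `H_t = ∫₀¹ ∇²V((1-s) x_t + s x̄_t) ds`. Then for `h` a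
sufficiently small multiple of `β^{-1/2}`,
`δx_h = δx₀ + h δp₀ + R_x` and `δp_h = δp₀ - (∫₀ʰ H_s ds) δx₀ + R_p`, where
`‖R_x‖ ≲ β h² ‖δx₀‖ + β h³ ‖δp₀‖` and `‖R_p‖ ≲ β h² ‖δp₀‖ + β² h³ ‖δx₀‖`. -/
theorem hamiltonian_flow_first_order :
    ∃ c C : ℝ, 0 < c ∧ 0 < C ∧
      ∀ (d : ℕ) (V : EuclideanSpace ℝ (Fin d) → ℝ) (β : ℝ), 0 < β →
        ContDiff ℝ 2 V →
        (∀ z : EuclideanSpace ℝ (Fin d), ‖fderiv ℝ (gradient V) z‖ ≤ β) →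
        ∀ (h : ℝ), 0 ≤ h → h * Real.sqrt β ≤ c →
          ∀ x p xb pb : ℝ → EuclideanSpace ℝ (Fin d),
            (∀ t ∈ Set.Icc (0 : ℝ) h, HasDerivAt x (p t) t) →
            (∀ t ∈ Set.Icc (0 : ℝ) h, HasDerivAt p (-(gradient V (x t))) t) →
            (∀ t ∈ Set.Icc (0 : ℝ) h, HasDerivAt xb (pb t) t) →
            (∀ t ∈ Set.Icc (0 : ℝ) h, HasDerivAt pb (-(gradient V (xb t))) t) →
            ‖(x h - xb h) - (x 0 - xb 0) - h • (p 0 - pb 0)‖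
                ≤ C * (β * h ^ 2 * ‖x 0 - xb 0‖ + β * h ^ 3 * ‖p 0 - pb 0‖)
              ∧ ‖(p h - pb h) - (p 0 - pb 0)
                    + (∫ s in (0 : ℝ)..h,
                        ∫ u in (0 : ℝ)..1,
                          fderiv ℝ (gradient V) ((1 - u) • x s + u • xb s))
                      (x 0 - xb 0)‖
                  ≤ C * (β * h ^ 2 * ‖p 0 - pb 0‖ + β ^ 2 * h ^ 3 * ‖x 0 - xb 0‖) := by
  refine ⟨1 / 2, 2, by norm_num, by norm_num, ?_⟩
  intro d V β hβ hV hHess h h0 hc x p xb pb hx hp hxb hpb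
  have hβh : β * h ^ 2 ≤ 1 / 2 := by
    have : β * h ^ 2 = (h * √β) ^ 2 := by rw [mul_pow, sq_sqrt hβ.le]; ring
    nlinarith [mul_nonneg h0 (sqrt_nonneg β)]
  have hgrad : ContDiff ℝ 1 (gradient V) := hV.gradient
  set A := fun s => meanFDeriv (gradient V) (x s) (xb s)
  have hAβ : ∀ s, ‖A s‖ ≤ β := fun s => norm_meanFDeriv_le hHess _ _
  have hA : ContinuousOn A (Icc 0 h) :=
    (HasDerivAt.continuousOn hx).meanFDeriv hgrad (HasDerivAt.continuousOn hxb)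
  have hu : ∀ t ∈ Icc 0 h, HasDerivAt (fun t => x t - xb t) (p t - pb t) t :=
    fun t ht => (hx t ht).fun_sub (hxb t ht)
  have hv : ∀ t ∈ Icc 0 h, HasDerivAt (fun t => p t - pb t) (-A t (x t - xb t)) t :=
    fun t ht => by
      rw [← sub_eq_meanFDeriv_apply hgrad, neg_sub, ← neg_sub_neg]
      exact (hp t ht).fun_sub (hpb t ht)
  refine ⟨norm_sub_sub_smul_le_of_second_order_bound hβ.le h0 hβh hu hv
    fun t _ => (norm_neg _).trans_le ((A t).le_of_opNorm_le (hAβ t) _), ?_⟩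
  simpa only [A, meanFDeriv] using
    norm_sub_add_integral_apply_le_of_linear_second_order hβ.le h0 hβh hA (fun t _ => hAβ t) hu hv
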